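/- Let 1 ≤ i ≤ j ≤ e with either (j = e−1 and 1 ≤ i ≤ e−1) or (j = e and 2 ≤ i ≤ e−1). Then every short exact sequence of Λ_e-modules 0 → U_{[i,j]} → E → U_{[i,j]} → 0 splits; equivalently, Ext¹ of U_{[i,j]} with itself, computed in the category of Λ_e-modules, vanishes. -/

import Mathlib

/-! Common framework: representations of the quiver Q_e / modules over the
generalized Brauer star algebra Λ_e, encoded as a module `V` together with
endomorphisms `v i` (images of the vertex idempotents), `a i` (images of the
arrows; `a i` is the arrow leaving vertex `i`, with `a ⟨e-1⟩` the arrow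
`α_e : e → 1`) and `d` (image of the loop `δ`). -/

namespace GBTA

structure PreRep (R : Type) [CommRing R] (e : ℕ) : Type 1 where
  V : Type
  [instAdd : AddCommGroup V]
  [instMod : Module R V]
  v : Fin e → Module.End R V
  a : Fin e → Module.End R V
  d : Module.End R V

attribute [instance] PreRep.instAdd PreRep.instMod

variable {R : Type} [CommRing R] {e : ℕ}

/-- The (0-based) index of the vertex `e`. -/
def ve (e : ℕ) [NeZero e] : Fin e :=
  ⟨e - 1, by have := Nat.pos_of_ne_zero (NeZero.ne e); omega⟩

/-- The (0-based) index of the vertex `e - 1`. -/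
def vem (e : ℕ) [NeZero e] : Fin e :=
  ⟨e - 2, by have := Nat.pos_of_ne_zero (NeZero.ne e); omega⟩

/-- The cycle `C_i`: the composite of the `e` cyclically consecutive arrows
starting with the arrow leaving vertex `i` (composites written right to left). -/
def cyc [NeZero e] (ρ : PreRep R e) (i : Fin e) : Module.End R ρ.V :=
  (((List.range e).reverse).map fun l => ρ.a (i + @Nat.cast (Fin e) (Fin.NatCast.instNatCast e) l)).prod

/-- The defining relations of the generalized Brauer star algebra `Λ_e`. -/
def Satisfies [NeZero e] (ρ : PreRep R e) : Prop :=
  (∀ i j : Fin e, i ≠ j → ρ.v i * ρ.v j = 0) ∧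
  (∀ i : Fin e, ρ.v i * ρ.v i = ρ.v i) ∧
  ((∑ i : Fin e, ρ.v i) = 1) ∧
  (∀ i : Fin e, ρ.a i = ρ.v (i + 1) * ρ.a i * ρ.v i) ∧
  (ρ.d = ρ.v (ve e) * ρ.d * ρ.v (ve e)) ∧
  (ρ.d * ρ.a (vem e) = 0) ∧
  (ρ.a (ve e) * ρ.d = 0) ∧
  (ρ.d * ρ.d = cyc ρ (ve e) * cyc ρ (ve e)) ∧
  (∀ i : Fin e, i ≠ ve e → ρ.a i * (cyc ρ i * cyc ρ i) = 0)

/-- The space of `Λ_e`-module homomorphisms `ρ → σ`: linear maps commuting with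
all the structure maps. -/
def homSet (ρ σ : PreRep R e) : Submodule R (ρ.V →ₗ[R] σ.V) where
  carrier := {f | (∀ i, f ∘ₗ ρ.v i = σ.v i ∘ₗ f) ∧ (∀ i, f ∘ₗ ρ.a i = σ.a i ∘ₗ f) ∧
    f ∘ₗ ρ.d = σ.d ∘ₗ f}
  add_mem' := by
    rintro f g ⟨hfv, hfa, hfd⟩ ⟨hgv, hga, hgd⟩
    exact ⟨fun i => by simp only [LinearMap.add_comp, LinearMap.comp_add, hfv i, hgv i],
      fun i => by simp only [LinearMap.add_comp, LinearMap.comp_add, hfa i, hga i],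
      by simp only [LinearMap.add_comp, LinearMap.comp_add, hfd, hgd]⟩
  zero_mem' := ⟨fun i => by simp, fun i => by simp, by simp⟩
  smul_mem' := by
    rintro c f ⟨hfv, hfa, hfd⟩
    exact ⟨fun i => by simp only [LinearMap.smul_comp, LinearMap.comp_smul, hfv i],
      fun i => by simp only [LinearMap.smul_comp, LinearMap.comp_smul, hfa i],
      by simp only [LinearMap.smul_comp, LinearMap.comp_smul, hfd]⟩

/-- Projectivity of a `Λ_e`-module, via the lifting property in the category of
`Λ_e`-modules. -/
def IsProjective [NeZero e] (P : PreRep R e) : Prop :=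
  Satisfies P ∧
  ∀ (A B : PreRep R e), Satisfies A → Satisfies B →
    ∀ p ∈ homSet A B, Function.Surjective p →
      ∀ g ∈ homSet P B, ∃ h ∈ homSet P A, p ∘ₗ h = g

/-- An endomorphism `f` of `ρ` factors through a projective `Λ_e`-module. -/
def FactorsThroughProjective [NeZero e] (ρ : PreRep R e) (f : ρ.V →ₗ[R] ρ.V) : Prop :=
  ∃ P : PreRep R e, IsProjective P ∧ ∃ g ∈ homSet ρ P, ∃ h ∈ homSet P ρ, f = h ∘ₗ g

/-- "The stable endomorphism ring of `ρ` is isomorphic to the scalars": the identity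
does not factor through a projective, and modulo endomorphisms factoring through
projectives every endomorphism is a scalar multiple of the identity. -/
def StableEndIsoScalars [NeZero e] (ρ : PreRep R e) : Prop :=
  (¬ FactorsThroughProjective ρ LinearMap.id) ∧
  ∀ f ∈ homSet ρ ρ, ∃ c : R, FactorsThroughProjective ρ (f - c • LinearMap.id)

/-- The linear map on `Fin m → W` sending the `src` coordinate to the `dst`
coordinate through `g`, and killing all other coordinates. -/
def mk1 {m : ℕ} {W : Type} [AddCommGroup W] [Module R W] (src dst : Fin m)
    (g : W →ₗ[R] W) : (Fin m → W) →ₗ[R] (Fin m → W) where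
  toFun x := fun r => if r = dst then g (x src) else 0
  map_add' x y := by funext r; by_cases h : r = dst <;> simp [h]
  map_smul' c x := by funext r; by_cases h : r = dst <;> simp [h]

/-- Projection onto the coordinates satisfying `S`. -/
def prj {m : ℕ} {W : Type} [AddCommGroup W] [Module R W] (S : Fin m → Prop)
    [DecidablePred S] : (Fin m → W) →ₗ[R] (Fin m → W) where
  toFun x := fun r => if S r then x r else 0
  map_add' x y := by funext r; by_cases h : S r <;> simp [h]
  map_smul' c x := by funext r; by_cases h : S r <;> simp [h]

/-- Last row index (`e`, 0-based) among `e+1` rows. -/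
def lastRow (e : ℕ) : Fin (e + 1) := ⟨e, Nat.lt_succ_self e⟩

/-- Second-to-last row index (`e-1`, 0-based) among `e+1` rows. -/
def sndRow (e : ℕ) : Fin (e + 1) := ⟨e - 1, by omega⟩

/-- The vertex carrying each of the `e+1` rows: row `r < e-1` sits at vertex `r`,
rows `e-1` and `e` sit at the vertex `e` (0-based index `e-1`). -/
def vrt (e : ℕ) [NeZero e] : Fin (e + 1) → Fin e := fun r =>
  if h : r.val < e - 1 then ⟨r.val, by omega⟩ else ve e


/-- The `n × n` Jordan block with eigenvalue `lam`. -/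
def jordan (R : Type) [CommRing R] (n : ℕ) (lam : R) : Matrix (Fin n) (Fin n) R :=
  Matrix.of fun i j => if i = j then lam else if (j : ℕ) = (i : ℕ) + 1 then 1 else 0

/-- The band module `B(n, lam)`. Rows `0, …, e-2` are the components `k^n` at the
vertices `1, …, e-1`; rows `e-1` and `e` are the two copies of `k^n` at vertex `e`. -/
@[reducible] def band (R : Type) [CommRing R] (e : ℕ) [NeZero e] (n : ℕ) (lam : R) : PreRep R e where
  V := Fin (e + 1) → Fin n → R
  v i := prj fun r => vrt e r = i
  a j :=
    if j.val = e - 1 then mk1 (sndRow e) ⟨0, by omega⟩ LinearMap.id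
    else if j.val = e - 2 then mk1 ⟨e - 2, by omega⟩ (lastRow e) LinearMap.id
    else mk1 ⟨j.val, Nat.lt_succ_of_lt j.isLt⟩ ⟨j.val + 1, Nat.succ_lt_succ j.isLt⟩ LinearMap.id
  d := mk1 (sndRow e) (lastRow e) (Matrix.mulVecLin (jordan R n lam))

/-- The band module `B(1, s)` (with `δ` acting through the scalar `s`); the standard
basis vector `c_i` (`1 ≤ i ≤ e-1`) is the `i-1`-st coordinate, `c_e` the `e-1`-st and
`c_{e+1}` the `e`-th. -/
@[reducible] def band1 (R : Type) [CommRing R] (e : ℕ) [NeZero e] (s : R) : PreRep R e where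
  V := Fin (e + 1) → R
  v i := prj fun r => vrt e r = i
  a j :=
    if j.val = e - 1 then mk1 (sndRow e) ⟨0, by omega⟩ LinearMap.id
    else if j.val = e - 2 then mk1 ⟨e - 2, by omega⟩ (lastRow e) LinearMap.id
    else mk1 ⟨j.val, Nat.lt_succ_of_lt j.isLt⟩ ⟨j.val + 1, Nat.succ_lt_succ j.isLt⟩ LinearMap.id
  d := mk1 (sndRow e) (lastRow e) (s • LinearMap.id)

/-- The projective module `P_e`, with basis `b_{i,1}, b_{i,2}` (row `i-1`) for
`1 ≤ i ≤ e-1` and `b_{e,1}, b_{e,2}` (row `e-1`), `b_{e,3}, b_{e,4}` (row `e`). -/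
@[reducible] def Pe (R : Type) [CommRing R] (e : ℕ) [NeZero e] : PreRep R e where
  V := Fin (e + 1) → Fin 2 → R
  v i := prj fun r => vrt e r = i
  a j :=
    if j.val = e - 1 then mk1 (sndRow e) ⟨0, by omega⟩ LinearMap.id
    else if j.val = e - 2 then
      mk1 ⟨e - 2, by omega⟩ (sndRow e) (Matrix.mulVecLin !![0, 0; 1, 0])
        + mk1 ⟨e - 2, by omega⟩ (lastRow e) (Matrix.mulVecLin !![0, 0; 0, 1])
    else mk1 ⟨j.val, Nat.lt_succ_of_lt j.isLt⟩ ⟨j.val + 1, Nat.succ_lt_succ j.isLt⟩ LinearMap.id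
  d := mk1 (sndRow e) (lastRow e) (Matrix.mulVecLin !![1, 0; 0, 0])
    + mk1 (lastRow e) (lastRow e) (Matrix.mulVecLin !![0, 0; 1, 0])

/-- `Mdef R e τ`: the representation with basis `m_1, …, m_{e+1}` (rows `0, …, e`),
`α_j(m_j) = m_{j+1}` for `j ≤ e-2`, `α_{e-1}(m_{e-1}) = τ · m_{e+1}`,
`α_e(m_e) = m_1`, `δ(m_e) = m_{e+1}`.  For `τ = 0` this is the string module `W`. -/
@[reducible] def Mdef (R : Type) [CommRing R] (e : ℕ) [NeZero e] (t : R) : PreRep R e where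
  V := Fin (e + 1) → R
  v i := prj fun r => vrt e r = i
  a j :=
    if j.val = e - 1 then mk1 (sndRow e) ⟨0, by omega⟩ LinearMap.id
    else if j.val = e - 2 then mk1 ⟨e - 2, by omega⟩ (lastRow e) (t • LinearMap.id)
    else mk1 ⟨j.val, Nat.lt_succ_of_lt j.isLt⟩ ⟨j.val + 1, Nat.succ_lt_succ j.isLt⟩ LinearMap.id
  d := mk1 (sndRow e) (lastRow e) LinearMap.id

/-- The uniserial module `U_{[i,j]}` (with `1 ≤ i ≤ j ≤ e`, 1-based). -/
@[reducible] def U (R : Type) [CommRing R] (e i j : ℕ) : PreRep R e where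
  V := Fin (j + 1 - i) → R
  v t := prj fun r => i - 1 + r.val = t.val
  a t :=
    if h : i ≤ t.val + 1 ∧ t.val + 1 ≤ j - 1 then
      mk1 ⟨t.val + 1 - i, by omega⟩ ⟨t.val + 2 - i, by omega⟩ LinearMap.id
    else 0
  d := 0

/-- The uniserial projective module `P_i` (`i0` is the 0-based index of the vertex),
with basis `p_0, …, p_{2e}` following the cycle of arrows twice around. -/
@[reducible] def Puni (R : Type) [CommRing R] (e : ℕ) [NeZero e] (i0 : ℕ) : PreRep R e where
  V := Fin (2 * e + 1) → R
  v t := prj fun r => (i0 + r.val) % e = t.val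
  a t := ∑ l : Fin (2 * e),
    if (i0 + l.val) % e = t.val then mk1 l.castSucc l.succ LinearMap.id else 0
  d := 0

/-- The simple module `S_e` at the vertex `e`. -/
@[reducible] def Se (R : Type) [CommRing R] (e : ℕ) [NeZero e] : PreRep R e where
  V := R
  v i := if i = ve e then 1 else 0
  a _ := 0
  d := 0

/-- Block upper triangular endomorphism `(x, y) ↦ (f x + θ y, f y)` of `V × V`. -/
def blk {V : Type} [AddCommGroup V] [Module R V] (f th : Module.End R V) :
    Module.End R (V × V) where
  toFun p := (f p.1 + th p.2, f p.2)
  map_add' p q := by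
    simp only [Prod.fst_add, Prod.snd_add, map_add, Prod.mk_add_mk, Prod.mk.injEq, and_true]
    abel
  map_smul' c p := by
    simp only [Prod.smul_fst, Prod.smul_snd, map_smul, Prod.smul_mk, Prod.mk.injEq,
      smul_add, RingHom.id_apply, and_self]

section Ext
variable [NeZero e]

/-- The data of a self-extension of `ρ`: for each generator of `Λ_e`, the
off-diagonal block of its action on `ρ.V × ρ.V`. -/
abbrev Cochain (ρ : PreRep R e) : Type :=
  (Fin e → Module.End R ρ.V) × (Fin e → Module.End R ρ.V) × Module.End R ρ.V

/-- The self-extension of `ρ` determined by the cochain `θ`. -/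
@[reducible] def extRep (ρ : PreRep R e) (th : Cochain ρ) : PreRep R e where
  V := ρ.V × ρ.V
  v i := blk (ρ.v i) (th.1 i)
  a i := blk (ρ.a i) (th.2.1 i)
  d := blk ρ.d th.2.2

/-- `θ` is a cocycle precisely when the corresponding extension is a `Λ_e`-module. -/
def IsCocycle (ρ : PreRep R e) (th : Cochain ρ) : Prop := Satisfies (extRep ρ th)

/-- The coboundary of `φ`; extensions differing by a coboundary are equivalent. -/
def bnd (ρ : PreRep R e) (phi : Module.End R ρ.V) : Cochain ρ :=
  (fun i => ρ.v i * phi - phi * ρ.v i, fun i => ρ.a i * phi - phi * ρ.a i,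
    ρ.d * phi - phi * ρ.d)

/-- `Ext¹_{Λ_e}(ρ, ρ)`, i.e. the space of self-extensions of `ρ` modulo equivalence
(equivalently cocycles modulo coboundaries), is one-dimensional. -/
def ExtSelfOneDimensional (ρ : PreRep R e) : Prop :=
  ∃ th0 : Cochain ρ, IsCocycle ρ th0 ∧ (∀ phi, th0 ≠ bnd ρ phi) ∧
    ∀ th : Cochain ρ, IsCocycle ρ th → ∃ (c : R) (phi : Module.End R ρ.V),
      th = c • th0 + bnd ρ phi

end Ext


/-- The endomorphism algebra of a representation. -/
def endAlg (ρ : PreRep R e) : Subalgebra R (Module.End R ρ.V) where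
  carrier := {f | (∀ i, f * ρ.v i = ρ.v i * f) ∧ (∀ i, f * ρ.a i = ρ.a i * f) ∧
    f * ρ.d = ρ.d * f}
  mul_mem' := by
    rintro f g ⟨hfv, hfa, hfd⟩ ⟨hgv, hga, hgd⟩
    refine ⟨fun i => ?_, fun i => ?_, ?_⟩
    · rw [mul_assoc, hgv i, ← mul_assoc, hfv i, mul_assoc]
    · rw [mul_assoc, hga i, ← mul_assoc, hfa i, mul_assoc]
    · rw [mul_assoc, hgd, ← mul_assoc, hfd, mul_assoc]
  one_mem' := ⟨fun i => by rw [one_mul, mul_one], fun i => by rw [one_mul, mul_one],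
    by rw [one_mul, mul_one]⟩
  add_mem' := by
    rintro f g ⟨hfv, hfa, hfd⟩ ⟨hgv, hga, hgd⟩
    exact ⟨fun i => by rw [add_mul, mul_add, hfv i, hgv i],
      fun i => by rw [add_mul, mul_add, hfa i, hga i],
      by rw [add_mul, mul_add, hfd, hgd]⟩
  zero_mem' := ⟨fun i => by rw [zero_mul, mul_zero], fun i => by rw [zero_mul, mul_zero],
    by rw [zero_mul, mul_zero]⟩
  algebraMap_mem' c :=
    ⟨fun i => Algebra.commutes c (ρ.v i), fun i => Algebra.commutes c (ρ.a i),
      Algebra.commutes c ρ.d⟩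

/-- The endomorphism `τ` of `B(1,λ)` (and of `W`): `c_e ↦ c_{e+1}`, all other
standard basis vectors to `0`. -/
def tau (R : Type) [CommRing R] (e : ℕ) : (Fin (e + 1) → R) →ₗ[R] (Fin (e + 1) → R) :=
  mk1 (sndRow e) (lastRow e) LinearMap.id

/-- The map `r₁ : B(1,λ) → P_e` (with parameter `μ` the coefficient on `b_{e,3}`):
`c_i ↦ b_{i,2}` for `1 ≤ i ≤ e-1`, `c_e ↦ b_{e,2} + μ b_{e,3}`, `c_{e+1} ↦ b_{e,4}`. -/
def r1 (R : Type) [CommRing R] (e : ℕ) (mu : R) :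
    (Fin (e + 1) → R) →ₗ[R] (Fin (e + 1) → Fin 2 → R) where
  toFun x := fun r c => if c = 1 then x r else if r = lastRow e then mu * x (sndRow e) else 0
  map_add' x y := by
    funext r c
    by_cases h : c = 1
    · simp [h]
    · by_cases h2 : r = lastRow e <;> simp [h, h2, mul_add]
  map_smul' t x := by
    funext r c
    by_cases h : c = 1
    · simp [h]
    · by_cases h2 : r = lastRow e <;> simp [h, h2] <;> ring

/-- The map `r₂ : B(1,λ) → P_e`: `c_e ↦ b_{e,4}`, all other basis vectors to `0`. -/
def r2 (R : Type) [CommRing R] (e : ℕ) :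
    (Fin (e + 1) → R) →ₗ[R] (Fin (e + 1) → Fin 2 → R) where
  toFun x := fun r c => if r = lastRow e ∧ c = 1 then x (sndRow e) else 0
  map_add' x y := by
    funext r c
    by_cases h : r = lastRow e ∧ c = 1 <;> simp [h]
  map_smul' t x := by
    funext r c
    by_cases h : r = lastRow e ∧ c = 1 <;> simp [h]

/-- The map `s₁ : P_e → B(1,λ)`: `b_{e,1} ↦ c_e`, `b_{e,2} ↦ c_{e+1}`,
`b_{e,3} ↦ λ c_{e+1}`, `b_{i,1} ↦ c_i`; zero on `b_{e,4}` and the `b_{i,2}`. -/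
def s1 (R : Type) [CommRing R] (e : ℕ) (lam : R) :
    (Fin (e + 1) → Fin 2 → R) →ₗ[R] (Fin (e + 1) → R) where
  toFun y := fun r =>
    if r = lastRow e then y (sndRow e) 1 + lam * y (lastRow e) 0 else y r 0
  map_add' x y := by
    funext r
    by_cases h : r = lastRow e <;> simp [h, mul_add] <;> ring
  map_smul' t x := by
    funext r
    by_cases h : r = lastRow e <;> simp [h] <;> ring

/-- The map `s₂ : P_e → B(1,λ)`: `b_{e,1} ↦ c_{e+1}`, all other basis vectors to `0`. -/
def s2 (R : Type) [CommRing R] (e : ℕ) :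
    (Fin (e + 1) → Fin 2 → R) →ₗ[R] (Fin (e + 1) → R) where
  toFun y := fun r => if r = lastRow e then y (sndRow e) 0 else 0
  map_add' x y := by funext r; by_cases h : r = lastRow e <;> simp [h]
  map_smul' t x := by funext r; by_cases h : r = lastRow e <;> simp [h]

/-- The map `g : W → P_e`, `w_e ↦ b_{e,3}`, `w_{e+1} ↦ b_{e,4}`, `w_j ↦ 0`. -/
def gW (R : Type) [CommRing R] (e : ℕ) :
    (Fin (e + 1) → R) →ₗ[R] (Fin (e + 1) → Fin 2 → R) where
  toFun x := fun r c =>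
    if r = lastRow e then (if c = 0 then x (sndRow e) else x (lastRow e)) else 0
  map_add' x y := by
    funext r c
    by_cases h : r = lastRow e <;> by_cases h2 : c = 0 <;> simp [h, h2]
  map_smul' t x := by
    funext r c
    by_cases h : r = lastRow e <;> by_cases h2 : c = 0 <;> simp [h, h2]

/-- The map `h : P_e → W`, `b_{e,1} ↦ w_e`, `b_{j,1} ↦ w_j`, `b_{e,3} ↦ w_{e+1}`,
zero on `b_{e,2}`, `b_{e,4}` and the `b_{j,2}`. -/
def hW (R : Type) [CommRing R] (e : ℕ) :
    (Fin (e + 1) → Fin 2 → R) →ₗ[R] (Fin (e + 1) → R) where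
  toFun y := fun r => y r 0
  map_add' x y := rfl
  map_smul' t x := rfl



/-! Lift the generator of the quotient `U_{[i,j]}` to `x ∈ E` and push it along the arrows:
`w_0 = v_i x`, `w_{r+1} = α_{i+r} w_r`. The images of `w_0, …, w_{j-i}` in `U_{[i,j]}` are its
standard basis, so they span a splitting as soon as `δ` kills them and the next step `w_{j-i+1}`
vanishes. That step sits at the vertex following `j`, where `U_{[i,j]}` has no component (this is
where the hypothesis on `i, j` enters); as it maps to zero in the quotient, it lies in the
submodule `U_{[i,j]}`, hence is zero. The path starts away from `e`, and it can only enter `e`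
through `α_{e-1}`, so `δ = v_e δ v_e` and `δ α_{e-1} = 0` make `δ` kill it. -/

open Fin.NatCast

lemma vem_add_one (e : ℕ) [NeZero e] : vem e + 1 = ve e := by
  rcases Nat.lt_or_ge e 2 with he | he
  · obtain rfl : e = 1 := by have := NeZero.ne e; omega
    rfl
  · ext
    rw [Fin.val_add, Fin.val_one', Nat.one_mod_eq_one.mpr (by omega)]
    simp only [vem, ve]
    exact Nat.mod_eq_of_lt (by omega) |>.trans (by omega)

lemma prj_single {m : ℕ} (S : Fin m → Prop) [DecidablePred S] (r : Fin m) (c : R) :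
    prj (R := R) S (Pi.single r c : Fin m → R) = if S r then Pi.single r c else 0 := by
  ext r'
  by_cases h : r' = r
  · subst h; split_ifs <;> simp [prj, *]
  · split_ifs <;> simp [prj, h]

lemma mk1_single {m : ℕ} (src dst r : Fin m) (c : R) :
    mk1 (R := R) src dst LinearMap.id (Pi.single r c : Fin m → R) =
      if src = r then Pi.single dst c else 0 := by
  ext r'
  by_cases h : r' = dst <;> by_cases h' : src = r <;> simp [mk1, h, h']

section pathSeq

variable [NeZero e]

/-- `i₀` is 0-based: `pathSeq E (i - 1) x` is the path `w` starting at the vertex `i`. -/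
def pathSeq (E : PreRep R e) (i₀ : ℕ) (x : E.V) : ℕ → E.V
  | 0 => E.v i₀ x
  | r + 1 => E.a (i₀ + r : ℕ) (pathSeq E i₀ x r)

variable {E σ : PreRep R e} {i₀ : ℕ} {x : E.V}

lemma map_pathSeq {g : E.V →ₗ[R] σ.V} (hg : g ∈ homSet E σ) (r : ℕ) :
    g (pathSeq E i₀ x r) = pathSeq σ i₀ (g x) r := by
  induction r with
  | zero => exact LinearMap.congr_fun (hg.1 _) x
  | succ r ih => rw [pathSeq, pathSeq, ← ih]; exact LinearMap.congr_fun (hg.2.1 _) _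

lemma v_pathSeq_self (hE : Satisfies E) (r : ℕ) :
    E.v (i₀ + r : ℕ) (pathSeq E i₀ x r) = pathSeq E i₀ x r := by
  obtain ⟨-, hidem, -, hava, -⟩ := hE
  cases r with
  | zero => exact LinearMap.congr_fun (hidem _) x
  | succ r =>
    rw [pathSeq, hava (i₀ + r : ℕ), ← add_assoc, Nat.cast_succ]
    exact LinearMap.congr_fun (hidem _) _

lemma v_pathSeq_of_ne (hE : Satisfies E) {t : Fin e} (r : ℕ) (ht : t ≠ (i₀ + r : ℕ)) :
    E.v t (pathSeq E i₀ x r) = 0 := by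
  rw [← v_pathSeq_self hE r, ← Module.End.mul_apply, hE.1 _ _ ht, LinearMap.zero_apply]

lemma d_pathSeq_of_ne (hE : Satisfies E) (r : ℕ) (hr : ((i₀ + r : ℕ) : Fin e) ≠ ve e) :
    E.d (pathSeq E i₀ x r) = 0 := by
  obtain ⟨-, -, -, -, hvdv, -⟩ := id hE
  rw [hvdv, Module.End.mul_apply, Module.End.mul_apply,
    v_pathSeq_of_ne hE r (Ne.symm hr), map_zero, map_zero]

lemma d_pathSeq_succ (hE : Satisfies E) (r : ℕ) : E.d (pathSeq E i₀ x (r + 1)) = 0 := by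
  obtain ⟨-, -, -, -, -, hda, -⟩ := id hE
  by_cases hr : ((i₀ + (r + 1) : ℕ) : Fin e) = ve e
  · have hvem : ((i₀ + r : ℕ) : Fin e) = vem e := by
      rw [← add_assoc, Nat.cast_succ, ← vem_add_one] at hr
      exact add_right_cancel hr
    rw [pathSeq, hvem, ← Module.End.mul_apply, hda, LinearMap.zero_apply]
  · exact d_pathSeq_of_ne hE _ hr

lemma d_pathSeq (hE : Satisfies E) (hi₀ : (i₀ : Fin e) ≠ ve e) :
    ∀ r, E.d (pathSeq E i₀ x r) = 0
  | 0 => d_pathSeq_of_ne hE 0 hi₀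
  | r + 1 => d_pathSeq_succ hE r

lemma a_pathSeq_of_ne (hE : Satisfies E) {t : Fin e} (r : ℕ) (ht : t ≠ (i₀ + r : ℕ)) :
    E.a t (pathSeq E i₀ x r) = 0 := by
  rw [hE.2.2.2.1 t, Module.End.mul_apply, Module.End.mul_apply, v_pathSeq_of_ne hE r ht,
    map_zero, map_zero]

end pathSeq

lemma eq_zero_of_mem_range_of_v_eq_zero {ρ E : PreRep R e} {f : ρ.V →ₗ[R] E.V}
    (hf : f ∈ homSet ρ E) {t : Fin e} (hρ : ρ.v t = 0) {y : E.V} (hy : y ∈ LinearMap.range f)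
    (hyt : E.v t y = y) : y = 0 := by
  obtain ⟨z, rfl⟩ := hy
  rw [← hyt, ← LinearMap.comp_apply, ← hf.1 t, LinearMap.comp_apply, hρ, LinearMap.zero_apply,
    map_zero]

section uniserial

variable {i j : ℕ}

lemma U_v_single (t : Fin e) (r : Fin (j + 1 - i)) (c : R) :
    (U R e i j).v t (Pi.single r c) = if i - 1 + r = t.val then Pi.single r c else 0 :=
  prj_single _ r c

lemma U_a_single (hi : 1 ≤ i) (t : Fin e) (r : Fin (j + 1 - i)) :
    (U R e i j).a t (Pi.single r 1) =
      if h : t.val = i - 1 + r ∧ r.val + 1 < j + 1 - i then Pi.single ⟨r + 1, h.2⟩ 1 else 0 := by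
  have hr := r.isLt
  by_cases hc : i ≤ t.val + 1 ∧ t.val + 1 ≤ j - 1
  · rw [show (U R e i j).a t = _ from dif_pos hc, mk1_single]
    by_cases h : t.val = i - 1 + r ∧ r.val + 1 < j + 1 - i
    · rw [if_pos (Fin.ext (by simp only; omega)), dif_pos h]
      congr 1
      ext
      simp only
      omega
    · rw [if_neg (fun h' => h (by rw [← h']; simp only; omega)), dif_neg h]
  · rw [show (U R e i j).a t = 0 from dif_neg hc, LinearMap.zero_apply,
      dif_neg (fun h => hc (by omega))]

lemma U_v_eq_zero {t : Fin e} (ht : ∀ r < j + 1 - i, i - 1 + r ≠ t.val) : (U R e i j).v t = 0 :=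
  LinearMap.ext fun _ => funext fun r => if_neg (ht r r.isLt)

variable [NeZero e]

lemma U_v_exit_eq_zero
    (hcase : (1 ≤ i ∧ i ≤ e - 1 ∧ j = e - 1) ∨ (2 ≤ i ∧ i ≤ e - 1 ∧ j = e)) :
    (U R e i j).v ((i - 1 + (j + 1 - i) : ℕ) : Fin e) = 0 := by
  refine U_v_eq_zero fun r hr => ?_
  rw [Fin.val_natCast]
  rcases hcase with ⟨h1, h2, rfl⟩ | ⟨h1, h2, hj⟩
  · rw [Nat.mod_eq_of_lt (by omega)]; omega
  · rw [show i - 1 + (j + 1 - i) = e by omega, Nat.mod_self]; omega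

lemma pathSeq_U_single (hi : 1 ≤ i) (hj : j ≤ e) {r : ℕ} (hr : r < j + 1 - i) :
    pathSeq (U R e i j) (i - 1) (Pi.single ⟨0, by omega⟩ 1) r = Pi.single ⟨r, hr⟩ 1 := by
  have hval (s : ℕ) (hs : s < j + 1 - i) : ((i - 1 + s : ℕ) : Fin e).val = i - 1 + s :=
    Nat.mod_eq_of_lt (by omega)
  induction r with
  | zero => rw [pathSeq, U_v_single, if_pos (by simpa using (hval 0 hr).symm)]
  | succ r ih =>
    rw [pathSeq, ih (by omega), U_a_single hi, dif_pos ⟨hval r (by omega), hr⟩]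

lemma pathSeq_U_exit (hi : 1 ≤ i) (hij : i ≤ j) (hj : j ≤ e) :
    pathSeq (U R e i j) (i - 1) (Pi.single ⟨0, by omega⟩ 1) (j + 1 - i) = 0 := by
  rw [congrArg (pathSeq _ _ _) (show j + 1 - i = j - i + 1 by omega), pathSeq,
    pathSeq_U_single hi hj (by omega), U_a_single hi, dif_neg (by simp only [not_and]; omega)]

def fromU (E : PreRep R e) (i j : ℕ) (x : E.V) : (U R e i j).V →ₗ[R] E.V :=
  Fintype.linearCombination R fun r : Fin (j + 1 - i) => pathSeq E (i - 1) x r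

lemma fromU_single (E : PreRep R e) (x : E.V) (r : Fin (j + 1 - i)) :
    fromU E i j x (Pi.single r 1) = pathSeq E (i - 1) x r := by
  rw [fromU, Fintype.linearCombination_apply_single, one_smul]

lemma fromU_mem_homSet {E : PreRep R e} (hE : Satisfies E) (hi : 1 ≤ i) (hj : j ≤ e) {x : E.V}
    (hexit : pathSeq E (i - 1) x (j + 1 - i) = 0)
    (hd : ∀ r < j + 1 - i, E.d (pathSeq E (i - 1) x r) = 0) :
    fromU E i j x ∈ homSet (U R e i j) E := by
  have hval (r : Fin (j + 1 - i)) : ((i - 1 + r : ℕ) : Fin e).val = i - 1 + r :=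
    Nat.mod_eq_of_lt (by omega)
  refine ⟨fun t => ?_, fun t => ?_, ?_⟩ <;> refine (Pi.basisFun R _).ext fun r => ?_ <;>
    simp only [Pi.basisFun_apply, LinearMap.comp_apply]
  · rw [U_v_single, fromU_single]
    split_ifs with h
    · obtain rfl : t = ((i - 1 + r : ℕ) : Fin e) := Fin.ext (h.symm.trans (hval r).symm)
      rw [fromU_single, v_pathSeq_self hE]
    · rw [map_zero, v_pathSeq_of_ne hE _ fun ht => h (by rw [ht, hval])]
  · rw [U_a_single hi, fromU_single]
    split_ifs with h
    · obtain rfl : t = ((i - 1 + r : ℕ) : Fin e) := Fin.ext (h.1.trans (hval r).symm)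
      rw [fromU_single]
      rfl
    · rw [map_zero]
      by_cases ht : t = ((i - 1 + r : ℕ) : Fin e)
      · subst ht
        have hr : r.val + 1 = j + 1 - i := by
          have := r.isLt; simp only [hval, true_and, not_lt] at h; omega
        change 0 = pathSeq E (i - 1) x (r + 1)
        rw [hr, hexit]
      · exact (a_pathSeq_of_ne hE _ ht).symm
  · rw [fromU_single, hd r r.isLt, LinearMap.zero_apply, map_zero]

end uniserial

theorem uniserial_ext_vanishes_general (k : Type) [Field k] (e : ℕ) [NeZero e]
    (i j : ℕ)
    (hcase : (1 ≤ i ∧ i ≤ e - 1 ∧ j = e - 1) ∨ (2 ≤ i ∧ i ≤ e - 1 ∧ j = e)) :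
    ∀ E : PreRep k e, Satisfies E →
      ∀ f ∈ homSet (U k e i j) E, ∀ g ∈ homSet E (U k e i j),
        Function.Injective f → Function.Surjective g →
          LinearMap.range f = LinearMap.ker g →
            ∃ s ∈ homSet (U k e i j) E, g ∘ₗ s = LinearMap.id := by
  intro E hE f hf g hg _ hsurj hexact
  have hi : 1 ≤ i := by omega
  have hij : i ≤ j := by omega
  have hje : j ≤ e := by omega
  obtain ⟨x, hx⟩ := hsurj (Pi.single ⟨0, by omega⟩ 1)
  have hgw (r : ℕ) : g (pathSeq E (i - 1) x r) =
      pathSeq (U k e i j) (i - 1) (Pi.single ⟨0, by omega⟩ 1) r := by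
    rw [map_pathSeq hg, hx]
  have hexit : pathSeq E (i - 1) x (j + 1 - i) = 0 := by
    refine eq_zero_of_mem_range_of_v_eq_zero hf (U_v_exit_eq_zero hcase) ?_ (v_pathSeq_self hE _)
    rw [hexact, LinearMap.mem_ker, hgw, pathSeq_U_exit hi hij hje]
  have hstart : ((i - 1 : ℕ) : Fin e) ≠ ve e :=
    Fin.ne_of_val_ne (by rw [Fin.val_natCast, Nat.mod_eq_of_lt (by omega)]; simp only [ve]; omega)
  refine ⟨fromU E i j x, fromU_mem_homSet hE hi hje hexit fun r _ => d_pathSeq hE hstart r, ?_⟩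
  refine (Pi.basisFun k _).ext fun r => ?_
  rw [Pi.basisFun_apply, LinearMap.comp_apply, fromU_single, hgw, pathSeq_U_single hi hje r.isLt,
    LinearMap.id_apply]

/-- For `j = e-1, 1 ≤ i ≤ e-1` or `j = e, 2 ≤ i ≤ e-1`,
every short exact sequence of `Λ_e`-modules
`0 → U_{[i,j]} → E → U_{[i,j]} → 0` splits. -/
theorem uniserial_ext_vanishes (k : Type) [Field k] (e : ℕ) (he : 2 ≤ e) [NeZero e]
    (i j : ℕ)
    (hcase : (1 ≤ i ∧ i ≤ e - 1 ∧ j = e - 1) ∨ (2 ≤ i ∧ i ≤ e - 1 ∧ j = e)) :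
    ∀ E : PreRep k e, Satisfies E →
      ∀ f ∈ homSet (U k e i j) E, ∀ g ∈ homSet E (U k e i j),
        Function.Injective f → Function.Surjective g →
          LinearMap.range f = LinearMap.ker g →
            ∃ s ∈ homSet (U k e i j) E, g ∘ₗ s = LinearMap.id :=
  uniserial_ext_vanishes_general k e i j hcase

end GBTA
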